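/- arXiv:1402.6266 — 3 statements merged into one kernel-verified Lean document; each statement's English description precedes it below -/
import Mathlib

section
/- Let Σ = {(x,y) ∈ ℝ²₊ : x + y = 1}, let S ⊂ ℝ²₊ be a connected set such that S intersects both the open segment {(0,y) : 0 < y < R} and {(x,0) : 0 < x < R} for some R > 0, and let G : S → Σ be continuous. Let π : S → Σ denote the projection along positive rays, π(s) = s/(s₁+s₂). Then there exists s ∈ S such that π(s) = G(s) (equivalently, s belongs to the preimage under π of G(s)). -/
/-- Lemma 2.1: fixed point along positive rays in the plane. -/
theorem stmt_0 (S : Set (ℝ × ℝ)) (R : ℝ) (hR : 0 < R)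
    (hSpos : ∀ p ∈ S, 0 ≤ p.1 ∧ 0 ≤ p.2)
    (hSne : ∀ p ∈ S, p ≠ 0)
    (hconn : IsConnected S)
    (hy : ∃ y : ℝ, 0 < y ∧ y < R ∧ ((0 : ℝ), y) ∈ S)
    (hx : ∃ x : ℝ, 0 < x ∧ x < R ∧ (x, (0 : ℝ)) ∈ S)
    (G : ℝ × ℝ → ℝ × ℝ) (hG : ContinuousOn G S)
    (hGSigma : ∀ p ∈ S, 0 ≤ (G p).1 ∧ 0 ≤ (G p).2 ∧ (G p).1 + (G p).2 = 1) :
    ∃ s ∈ S, (s.1 / (s.1 + s.2), s.2 / (s.1 + s.2)) = G s := by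
  obtain ⟨y, hy0, _, hyS⟩ := hy
  obtain ⟨x, hx0, _, hxS⟩ := hx
  have hsum : ∀ p ∈ S, 0 < p.1 + p.2 := by
    intro p hp
    rcases (hSpos p hp) with ⟨h1, h2⟩
    rcases lt_or_eq_of_le h1 with h | h
    · linarith
    rcases lt_or_eq_of_le h2 with h' | h'
    · linarith
    exact absurd (Prod.ext h.symm h'.symm) (hSne p hp)
  have hf : ContinuousOn (fun p : ℝ × ℝ => p.1 / (p.1 + p.2)) S := by
    apply ContinuousOn.div (continuousOn_fst) (continuousOn_fst.add continuousOn_snd)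
    intro p hp; exact ne_of_gt (hsum p hp)
  have hg : ContinuousOn (fun p : ℝ × ℝ => (G p).1) S := hG.fst
  have ha : (fun p : ℝ × ℝ => p.1 / (p.1 + p.2)) ((0 : ℝ), y) ≤
      (fun p : ℝ × ℝ => (G p).1) ((0 : ℝ), y) := by
    simp only
    rw [zero_div]
    exact (hGSigma _ hyS).1
  have hb : (fun p : ℝ × ℝ => (G p).1) (x, (0 : ℝ)) ≤
      (fun p : ℝ × ℝ => p.1 / (p.1 + p.2)) (x, (0 : ℝ)) := by
    simp only
    rw [add_zero, div_self (ne_of_gt hx0)]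
    have h := hGSigma _ hxS
    linarith [h.2.1, h.2.2]
  obtain ⟨s, hsS, hs⟩ := hconn.isPreconnected.intermediate_value₂ hyS hxS hf hg ha hb
  refine ⟨s, hsS, ?_⟩
  have hsum' := hsum s hsS
  have h2 : s.2 / (s.1 + s.2) = (G s).2 := by
    have : s.2 / (s.1 + s.2) = 1 - s.1 / (s.1 + s.2) := by
      field_simp
      ring
    rw [this, hs]
    have h := (hGSigma s hsS).2.2
    linarith
  exact Prod.ext hs h2
end

section
/- Let γ be a topological space homeomorphic to [0,1] via h : γ → [0,1], and let Φ be a set-valued map from γ to γ (i.e. Φ : γ → Set γ) with Φ(q) ≠ ∅ for all q. Suppose the set K = {(x,y) ∈ [0,1]² : y ∈ h(Φ(h⁻¹(x)))} is connected. Then Φ has a fixed point: there exists q* ∈ γ with q* ∈ Φ(q*). -/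
/-- Lemma 2.8: fixed point of a set-valued map on a curve homeomorphic to [0,1]. -/
theorem stmt_5 {γ : Type*} [TopologicalSpace γ]
    (h : γ ≃ₜ Set.Icc (0 : ℝ) 1)
    (Φ : γ → Set γ) (hne : ∀ q, (Φ q).Nonempty)
    (hK : IsConnected {p : Set.Icc (0 : ℝ) 1 × Set.Icc (0 : ℝ) 1 |
      p.2 ∈ h '' Φ (h.symm p.1)}) :
    ∃ q : γ, q ∈ Φ q := by
  set K := {p : Set.Icc (0 : ℝ) 1 × Set.Icc (0 : ℝ) 1 |
      p.2 ∈ h '' Φ (h.symm p.1)} with hKdef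
  -- a point of K with first coordinate 0
  obtain ⟨a0, ha0⟩ := hne (h.symm ⟨0, by norm_num, by norm_num⟩)
  obtain ⟨a1, ha1⟩ := hne (h.symm ⟨1, by norm_num, by norm_num⟩)
  have hp0 : ((⟨0, by norm_num, by norm_num⟩ : Set.Icc (0:ℝ) 1), h a0) ∈ K :=
    ⟨a0, ha0, rfl⟩
  have hp1 : ((⟨1, by norm_num, by norm_num⟩ : Set.Icc (0:ℝ) 1), h a1) ∈ K :=
    ⟨a1, ha1, rfl⟩
  -- f p = x - y
  set f : Set.Icc (0:ℝ) 1 × Set.Icc (0:ℝ) 1 → ℝ := fun p => (p.1 : ℝ) - (p.2 : ℝ) with hf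
  have hfc : ContinuousOn f K := by
    apply Continuous.continuousOn
    exact (continuous_subtype_val.comp continuous_fst).sub
      (continuous_subtype_val.comp continuous_snd)
  have h0 : (0:ℝ) ∈ Set.Icc (f (⟨0, by norm_num, by norm_num⟩, h a0))
      (f (⟨1, by norm_num, by norm_num⟩, h a1)) := by
    constructor
    · simp [hf]
      exact (h a0).2.1
    · simp [hf]
      exact (h a1).2.2
  have := hK.isPreconnected.intermediate_value hp0 hp1 hfc h0
  obtain ⟨p, hpK, hfp⟩ := this
  have hxy : p.1 = p.2 := Subtype.ext (by linarith [sub_eq_zero.mp hfp])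
  obtain ⟨a, haΦ, hha⟩ := hpK
  refine ⟨a, ?_⟩
  have : a = h.symm p.1 := by
    rw [← hha] at hxy
    have := congrArg h.symm hxy
    simpa using this.symm
  rwa [← this] at haΦ
end

section
/- Let X be a normed vector lattice (or just a normed space), K ⊆ X a closed cone (closed under nonnegative linear combinations, K ∩ (−K) = {0}, K ≠ {0}), S the unit sphere of X, and C the convex hull of S ∩ K. Let L : X → X be a bounded linear operator that is strictly K-positive, i.e. L(K) ⊆ K and L(k) ≠ 0 for all k ∈ K \ {0}. If L(C) is relatively compact in X \ {0} (its closure is compact and contained in X \ {0}), then L has a positive eigenvalue λ > 0 with an eigenvector in K \ {0}: there exist x ∈ K with ‖x‖ = 1 and λ = ‖L x‖ > 0 such that L x = λ x. -/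
open Finset Metric

lemma core_lemma (a : ℕ → ℝ) (hpos : ∀ n, 0 < a n)
    (hA : ∀ ε : ℝ, 0 < ε → ∃ C : ℝ, 0 < C ∧ ∀ n, a n ≤ C * (1 + ε) ^ n)
    (hB : ∀ θ C : ℝ, 0 < θ → θ < 1 → 0 < C → ∃ n, C * θ ^ n < a n)
    (ε : ℝ) (hε : 0 < ε) (hε1 : ε < 1) :
    ∃ m l : ℕ, 0 < l ∧
      a (m + 1) + a (m + l + 1) ≤ ε * ∑ k ∈ range l, a (m + k + 1) := by
  by_contra h
  push_neg at h
  set S : ℕ → ℕ → ℝ := fun m l => ∑ k ∈ range l, a (m + k + 1) with hS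
  have H : ∀ m l, 0 < l → ε * S m l < a (m + 1) + a (m + l + 1) := h
  have Spos : ∀ m l, 0 < l → 0 < S m l := by
    intro m l hl
    exact Finset.sum_pos (fun k _ => hpos _) (by simpa using hl.ne')
  have Ssucc : ∀ m l, S m (l + 1) = S m l + a (m + l + 1) := by
    intro m l; simpa using Finset.sum_range_succ (fun k => a (m + k + 1)) l
  have Sshift : ∀ m l, S m (l + 1) = a (m + 1) + S (m + 1) l := by
    intro m l
    have e1 : ∑ k ∈ range l, a (m + (k + 1) + 1) = ∑ k ∈ range l, a (m + 1 + k + 1) :=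
      Finset.sum_congr rfl (fun k _ => by rw [show m + (k+1) + 1 = (m+1)+k+1 from by omega])
    calc S m (l + 1) = (∑ k ∈ range l, a (m + (k + 1) + 1)) + a (m + 0 + 1) :=
          Finset.sum_range_succ' (fun k => a (m + k + 1)) l
    _ = a (m + 1) + S (m + 1) l := by rw [e1, add_comm]
  -- Claim 1
  have claim1 : ∀ m l, 0 < l → S m l < 2 / ε * a (m + 1) := by
    by_contra hc
    push_neg at hc
    obtain ⟨m₀, l₀, hl₀, hS₀⟩ := hc
    have step : ∀ t : ℕ, (1 + ε / 2) ^ t * S m₀ l₀ ≤ S m₀ (l₀ + t) →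
        ε / 2 * S m₀ (l₀ + t) < a (m₀ + (l₀ + t) + 1) := by
      intro t ih
      have h1 : (1 : ℝ) ≤ (1 + ε / 2) ^ t := one_le_pow₀ (by linarith)
      have hge : S m₀ l₀ ≤ S m₀ (l₀ + t) := by
        calc S m₀ l₀ = 1 * S m₀ l₀ := (one_mul _).symm
        _ ≤ (1 + ε / 2) ^ t * S m₀ l₀ :=
            mul_le_mul_of_nonneg_right h1 (Spos m₀ l₀ hl₀).le
        _ ≤ S m₀ (l₀ + t) := ih
      have h2 : 2 / ε * a (m₀ + 1) ≤ S m₀ (l₀ + t) := le_trans hS₀ hge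
      have h2' := mul_le_mul_of_nonneg_left h2 (le_of_lt (by positivity : (0:ℝ) < ε / 2))
      have ha1 : a (m₀ + 1) ≤ ε / 2 * S m₀ (l₀ + t) := by
        calc a (m₀ + 1) = ε / 2 * (2 / ε * a (m₀ + 1)) := by field_simp
        _ ≤ ε / 2 * S m₀ (l₀ + t) := h2'
      have hH := H m₀ (l₀ + t) (by omega)
      linarith
    have key : ∀ t : ℕ, (1 + ε / 2) ^ t * S m₀ l₀ ≤ S m₀ (l₀ + t) := by
      intro t
      induction t with
      | zero => simp
      | succ t ih =>
        have ha2 := step t ih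
        refine le_of_lt ?_
        calc (1 + ε / 2) ^ (t + 1) * S m₀ l₀
            = (1 + ε / 2) * ((1 + ε / 2) ^ t * S m₀ l₀) := by ring
          _ ≤ (1 + ε / 2) * S m₀ (l₀ + t) :=
              mul_le_mul_of_nonneg_left ih (by linarith)
          _ = S m₀ (l₀ + t) + ε / 2 * S m₀ (l₀ + t) := by ring
          _ < S m₀ (l₀ + t) + a (m₀ + (l₀ + t) + 1) := by linarith
          _ = S m₀ (l₀ + (t + 1)) := by
              rw [show l₀ + (t + 1) = (l₀ + t) + 1 from rfl, Ssucc]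
    have key2 : ∀ t : ℕ, ε / 2 * ((1 + ε / 2) ^ t * S m₀ l₀) < a (m₀ + l₀ + t + 1) := by
      intro t
      have ha2 := step t (key t)
      have h3 : ε / 2 * ((1 + ε / 2) ^ t * S m₀ l₀) ≤ ε / 2 * S m₀ (l₀ + t) :=
        mul_le_mul_of_nonneg_left (key t) (by positivity)
      have heq : m₀ + (l₀ + t) + 1 = m₀ + l₀ + t + 1 := by omega
      rw [heq] at ha2
      linarith
    obtain ⟨C, hC, hCa⟩ := hA (ε / 4) (by positivity)
    set C₁ : ℝ := C * (1 + ε / 4) ^ (m₀ + l₀ + 1) with hC₁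
    have hC₁pos : 0 < C₁ := by positivity
    set c : ℝ := ε / 2 * S m₀ l₀ with hc
    have hcpos : 0 < c := by
      have := Spos m₀ l₀ hl₀; positivity
    set r : ℝ := (1 + ε / 2) / (1 + ε / 4) with hr
    have hr1 : 1 < r := by
      rw [hr, lt_div_iff₀ (by linarith)]
      linarith
    obtain ⟨t, ht⟩ := pow_unbounded_of_one_lt (C₁ / c) hr1
    have h1 : c * (1 + ε / 2) ^ t < a (m₀ + l₀ + t + 1) := by
      have := key2 t
      calc c * (1 + ε / 2) ^ t = ε / 2 * ((1 + ε / 2) ^ t * S m₀ l₀) := by rw [hc]; ring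
      _ < a (m₀ + l₀ + t + 1) := this
    have h2 : a (m₀ + l₀ + t + 1) ≤ C₁ * (1 + ε / 4) ^ t := by
      calc a (m₀ + l₀ + t + 1) ≤ C * (1 + ε / 4) ^ (m₀ + l₀ + t + 1) := hCa _
      _ = C₁ * (1 + ε / 4) ^ t := by
          rw [hC₁, mul_assoc, ← pow_add, show m₀ + l₀ + 1 + t = m₀ + l₀ + t + 1 from by omega]
    have h3 : C₁ < c * r ^ t := by
      rw [div_lt_iff₀ hcpos] at ht; linarith [ht]
    have h4 : (1 + ε / 2) ^ t = r ^ t * (1 + ε / 4) ^ t := by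
      rw [← mul_pow, hr, div_mul_cancel₀]
      linarith
    have h5 : (0:ℝ) < (1 + ε / 4) ^ t := by positivity
    nlinarith [mul_lt_mul_of_pos_right h3 h5]
  -- Claim 2
  have claim2 : ∀ j l, 0 < l → S j l ≤ (1 - ε / 2) ^ j * S 0 (l + j) := by
    intro j
    induction j with
    | zero => intro l hl; simp
    | succ j ih =>
      intro l hl
      have h1 : S j (l + 1) = a (j + 1) + S (j + 1) l := Sshift j l
      have h2 : S j (l + 1) < 2 / ε * a (j + 1) := claim1 j (l + 1) (by omega)
      have h3 : ε / 2 * S j (l + 1) < a (j + 1) := by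
        have h2' := mul_lt_mul_of_pos_left h2 (by positivity : (0:ℝ) < ε / 2)
        calc ε / 2 * S j (l + 1) < ε / 2 * (2 / ε * a (j + 1)) := h2'
        _ = a (j + 1) := by field_simp
      have h4 : S (j + 1) l ≤ (1 - ε / 2) * S j (l + 1) := by
        have := Spos j (l + 1) (by omega)
        nlinarith
      have h5 : S j (l + 1) ≤ (1 - ε / 2) ^ j * S 0 (l + 1 + j) := ih (l + 1) (by omega)
      have h6 : (0:ℝ) ≤ 1 - ε / 2 := by linarith
      calc S (j + 1) l ≤ (1 - ε / 2) * S j (l + 1) := h4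
      _ ≤ (1 - ε / 2) * ((1 - ε / 2) ^ j * S 0 (l + 1 + j)) :=
          mul_le_mul_of_nonneg_left h5 h6
      _ = (1 - ε / 2) ^ (j + 1) * S 0 (l + (j + 1)) := by
          rw [show l + 1 + j = l + (j + 1) from by omega]; ring
  have decay : ∀ j, a (j + 1) ≤ (1 - ε / 2) ^ j * (2 / ε * a 1) := by
    intro j
    have h1 : a (j + 1) = S j 1 := by simp [hS]
    have h2 : S j 1 ≤ (1 - ε / 2) ^ j * S 0 (1 + j) := claim2 j 1 (by omega)
    have h3 : S 0 (1 + j) < 2 / ε * a (0 + 1) := claim1 0 (1 + j) (by omega)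
    have h6 : (0:ℝ) ≤ (1 - ε / 2) ^ j := pow_nonneg (by linarith) j
    calc a (j + 1) ≤ (1 - ε / 2) ^ j * S 0 (1 + j) := h1 ▸ h2
    _ ≤ (1 - ε / 2) ^ j * (2 / ε * a 1) := by
        apply mul_le_mul_of_nonneg_left _ h6
        simpa using h3.le
  set θ : ℝ := 1 - ε / 2 with hθ
  have hθ0 : 0 < θ := by rw [hθ]; linarith
  have hθ1 : θ < 1 := by rw [hθ]; linarith
  clear_value θ
  set C₂ : ℝ := 2 / ε * a 1 / θ with hC₂
  have hC₂pos : 0 < C₂ := by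
    have h1 := hpos 1
    exact div_pos (mul_pos (div_pos two_pos hε) h1) hθ0
  clear_value C₂
  set C₃ : ℝ := max (a 0) C₂ with hC₃
  have hC₃pos : 0 < C₃ := lt_of_lt_of_le hC₂pos (le_max_right _ _)
  have hub : ∀ n, a n ≤ C₃ * θ ^ n := by
    intro n
    match n with
    | 0 =>
      rw [pow_zero, mul_one]
      exact le_max_left _ _
    | (j + 1) =>
      have hd := decay j
      have h1 : θ ^ j * (2 / ε * a 1) = C₂ * θ ^ (j + 1) := by
        rw [hC₂, pow_succ]
        field_simp [hθ0.ne']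
      have h2 : C₂ * θ ^ (j+1) ≤ C₃ * θ ^ (j+1) :=
        mul_le_mul_of_nonneg_right (le_max_right _ _) (by positivity)
      linarith [h1 ▸ hd]
  obtain ⟨n, hn⟩ := hB θ C₃ hθ0 hθ1 hC₃pos
  exact absurd (hub n) (not_le.mpr hn)

section aux
variable {X : Type*} [NormedAddCommGroup X] [NormedSpace ℝ X]

/-- iterated normalized images -/
noncomputable def useq (L : X →L[ℝ] X) (x₀ : X) : ℕ → X
  | 0 => x₀
  | n + 1 => ‖L (useq L x₀ n)‖⁻¹ • L (useq L x₀ n)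

lemma cone_smul (K : Set X)
    (hKadd : ∀ f ∈ K, ∀ g ∈ K, ∀ a b : ℝ, 0 ≤ a → 0 ≤ b → a • f + b • g ∈ K)
    {k : X} (hk : k ∈ K) {a : ℝ} (ha : 0 ≤ a) : a • k ∈ K := by
  have := hKadd k hk k hk a 0 ha le_rfl
  simpa using this

lemma cone_sum (K : Set X) (h0 : (0 : X) ∈ K)
    (hKadd : ∀ f ∈ K, ∀ g ∈ K, ∀ a b : ℝ, 0 ≤ a → 0 ≤ b → a • f + b • g ∈ K)
    (J : Finset ℕ) (c : ℕ → ℝ) (p : ℕ → X)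
    (hc : ∀ j ∈ J, 0 ≤ c j) (hp : ∀ j ∈ J, p j ∈ K) :
    ∑ j ∈ J, c j • p j ∈ K := by
  classical
  induction J using Finset.induction_on with
  | empty => simpa using h0
  | @insert j J hj ih =>
    rw [Finset.sum_insert hj]
    have h1 : ∑ i ∈ J, c i • p i ∈ K :=
      ih (fun i hi => hc i (Finset.mem_insert_of_mem hi))
        (fun i hi => hp i (Finset.mem_insert_of_mem hi))
    have h2 := hKadd (p j) (hp j (Finset.mem_insert_self j J))
      (∑ i ∈ J, c i • p i) h1 (c j) 1 (hc j (Finset.mem_insert_self j J)) zero_le_one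
    simpa using h2

end aux



/-- Theorem 2.12: non-quasinilpotency of strictly K-positive operators. -/
theorem stmt_7 {X : Type*} [NormedAddCommGroup X] [NormedSpace ℝ X]
    (K : Set X) (hKclosed : IsClosed K)
    (hKadd : ∀ f ∈ K, ∀ g ∈ K, ∀ a b : ℝ, 0 ≤ a → 0 ≤ b → a • f + b • g ∈ K)
    (hKpointed : K ∩ (-K) = {0}) (hKne : K ≠ {0})
    (L : X →L[ℝ] X)
    (hLpos : ∀ k ∈ K, L k ∈ K)
    (hLstrict : ∀ k ∈ K, k ≠ 0 → L k ≠ 0)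
    (hcomp : IsCompact (closure (L '' (convexHull ℝ (Metric.sphere (0 : X) 1 ∩ K)))))
    (hne0 : closure (L '' (convexHull ℝ (Metric.sphere (0 : X) 1 ∩ K))) ⊆ {x : X | x ≠ 0}) :
    ∃ x ∈ K, ‖x‖ = 1 ∧ 0 < ‖L x‖ ∧ L x = ‖L x‖ • x := by
  classical
  set M : ℝ := ‖L‖ with hM
  set Cs : Set X := Metric.sphere (0 : X) 1 ∩ K with hCs
  set CH : Set X := convexHull ℝ Cs with hCH
  set D : Set X := closure (L '' CH) with hD
  -- 0 ∈ K
  have h0K : (0 : X) ∈ K := by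
    have : (0 : X) ∈ K ∩ (-K) := by rw [hKpointed]; rfl
    exact this.1
  -- a unit vector in K
  obtain ⟨x₀, hx₀K, hx₀n⟩ : ∃ x₀ ∈ K, ‖x₀‖ = 1 := by
    have hex : ∃ k ∈ K, k ≠ 0 := by
      by_contra hc
      push_neg at hc
      apply hKne
      ext x
      constructor
      · intro hx; exact hc x hx
      · intro hx; rw [Set.mem_singleton_iff] at hx; rw [hx]; exact h0K
    obtain ⟨k, hkK, hkne⟩ := hex
    refine ⟨‖k‖⁻¹ • k, cone_smul K hKadd hkK (inv_nonneg.mpr (norm_nonneg k)), ?_⟩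
    rw [norm_smul, norm_inv, norm_norm, inv_mul_cancel₀ (norm_ne_zero_iff.mpr hkne)]
  have hx₀Cs : x₀ ∈ Cs := ⟨by simpa using hx₀n, hx₀K⟩
  have hCsCH : Cs ⊆ CH := subset_convexHull ℝ Cs
  have hx₀CH : x₀ ∈ CH := hCsCH hx₀Cs
  have hDne : D.Nonempty := ⟨L x₀, subset_closure ⟨x₀, hx₀CH, rfl⟩⟩
  -- minimal norm δ on D
  obtain ⟨y₀, hy₀D, hy₀min⟩ :=
    hcomp.exists_isMinOn hDne continuous_norm.continuousOn
  set δ : ℝ := ‖y₀‖ with hδ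
  have hδ0 : 0 < δ := by
    have : y₀ ≠ 0 := hne0 hy₀D
    simpa [hδ] using norm_pos_iff.mpr this
  have hδle : ∀ v ∈ CH, δ ≤ ‖L v‖ := fun v hv =>
    hy₀min (subset_closure ⟨v, hv, rfl⟩)
  have hM0 : 0 < M := lt_of_lt_of_le hδ0 (by
    calc δ ≤ ‖L x₀‖ := hδle x₀ hx₀CH
    _ ≤ M * ‖x₀‖ := L.le_opNorm x₀
    _ = M := by rw [hx₀n, mul_one])
  -- the sequence u
  set u : ℕ → X := useq L x₀ with hu
  have huKS : ∀ n, u n ∈ K ∧ ‖u n‖ = 1 := by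
    intro n
    induction n with
    | zero => exact ⟨hx₀K, hx₀n⟩
    | succ n ih =>
      have hne : u n ≠ 0 := fun h => by rw [h] at ih; simpa using ih.2
      have hLn : L (u n) ≠ 0 := hLstrict (u n) ih.1 hne
      have hbn : (0:ℝ) < ‖L (u n)‖ := norm_pos_iff.mpr hLn
      constructor
      · exact cone_smul K hKadd (hLpos (u n) ih.1) (inv_nonneg.mpr hbn.le)
      · show ‖(‖L (u n)‖⁻¹ • L (u n) : X)‖ = 1
        rw [norm_smul, norm_inv, norm_norm, inv_mul_cancel₀ hbn.ne']
  have huCs : ∀ n, u n ∈ Cs := fun n => ⟨by simpa using (huKS n).2, (huKS n).1⟩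
  set b : ℕ → ℝ := fun n => ‖L (u n)‖ with hb
  have hbδ : ∀ n, δ ≤ b n := fun n => hδle (u n) (hCsCH (huCs n))
  have hb0 : ∀ n, 0 < b n := fun n => lt_of_lt_of_le hδ0 (hbδ n)
  have hbM : ∀ n, b n ≤ M := fun n => by
    calc b n = ‖L (u n)‖ := rfl
    _ ≤ M * ‖u n‖ := L.le_opNorm (u n)
    _ = M := by rw [(huKS n).2, mul_one]
  have husucc : ∀ n, u (n + 1) = (b n)⁻¹ • L (u n) := fun n => rfl
  have hLu : ∀ n, L (u n) = b n • u (n + 1) := by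
    intro n
    rw [husucc n, smul_inv_smul₀ (hb0 n).ne']
  -- products
  set P : ℕ → ℝ := fun n => ∏ j ∈ range n, b j with hP
  have hP0 : ∀ n, 0 < P n := fun n => Finset.prod_pos (fun j _ => hb0 j)
  have hPsucc : ∀ n, P (n + 1) = P n * b n := fun n => Finset.prod_range_succ b n
  have hPδ : ∀ n, δ ^ n ≤ P n := by
    intro n
    calc δ ^ n = ∏ _j ∈ range n, δ := by rw [Finset.prod_const, card_range]
    _ ≤ P n := Finset.prod_le_prod (fun j _ => hδ0.le) (fun j _ => hbδ j)
  have hPM : ∀ n, P n ≤ M ^ n := by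
    intro n
    calc P n ≤ ∏ _j ∈ range n, M :=
          Finset.prod_le_prod (fun j _ => (hb0 j).le) (fun j _ => hbM j)
    _ = M ^ n := by rw [Finset.prod_const, card_range]
  -- the "spectral radius" ρ
  set U : Set ℝ := {μ : ℝ | 0 < μ ∧ ∃ C : ℝ, 0 < C ∧ ∀ n, P n ≤ C * μ ^ n} with hU
  have hMU : M ∈ U := ⟨hM0, 1, one_pos, fun n => by simpa using hPM n⟩
  have hUlb : ∀ μ ∈ U, δ ≤ μ := by
    intro μ hμ
    obtain ⟨hμ0, C, hC0, hCn⟩ := hμ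
    by_contra hlt
    push_neg at hlt
    have h1 : 1 < δ / μ := (one_lt_div hμ0).mpr hlt
    obtain ⟨n, hn⟩ := pow_unbounded_of_one_lt C h1
    have h2 : δ ^ n ≤ C * μ ^ n := le_trans (hPδ n) (hCn n)
    have h3 : (δ / μ) ^ n ≤ C := by
      rw [div_pow, div_le_iff₀ (pow_pos hμ0 n)]
      linarith
    linarith
  have hUne : U.Nonempty := ⟨M, hMU⟩
  have hUbdd : BddBelow U := ⟨δ, fun μ hμ => hUlb μ hμ⟩
  set ρ : ℝ := sInf U with hρ
  have hρδ : δ ≤ ρ := le_csInf hUne hUlb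
  have hρ0 : 0 < ρ := lt_of_lt_of_le hδ0 hρδ
  have hρM : ρ ≤ M := csInf_le hUbdd hMU
  have hUup : ∀ μ ∈ U, ∀ μ' : ℝ, μ ≤ μ' → μ' ∈ U := by
    intro μ hμ μ' hle
    obtain ⟨hμ0, C, hC0, hCn⟩ := hμ
    exact ⟨lt_of_lt_of_le hμ0 hle, C, hC0, fun n =>
      le_trans (hCn n) (mul_le_mul_of_nonneg_left
        (pow_le_pow_left₀ hμ0.le hle n) hC0.le)⟩
  -- normalized sequence a
  set a : ℕ → ℝ := fun n => P n / ρ ^ n with ha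
  have hapos : ∀ n, 0 < a n := fun n => div_pos (hP0 n) (pow_pos hρ0 n)
  have hA : ∀ ε : ℝ, 0 < ε → ∃ C : ℝ, 0 < C ∧ ∀ n, a n ≤ C * (1 + ε) ^ n := by
    intro ε hε
    have h1 : ρ < ρ * (1 + ε) := by nlinarith
    obtain ⟨μ, hμU, hμlt⟩ := exists_lt_of_csInf_lt hUne h1
    obtain ⟨hg0, C, hC0, hCn⟩ := hUup μ hμU (ρ * (1 + ε)) hμlt.le
    refine ⟨C, hC0, fun n => ?_⟩
    have h2 : P n ≤ C * (ρ ^ n * (1 + ε) ^ n) := by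
      have := hCn n
      rwa [mul_pow] at this
    rw [ha]
    rw [div_le_iff₀ (pow_pos hρ0 n)]
    calc P n ≤ C * (ρ ^ n * (1 + ε) ^ n) := h2
    _ = C * (1 + ε) ^ n * ρ ^ n := by ring
  have hB : ∀ θ C : ℝ, 0 < θ → θ < 1 → 0 < C → ∃ n, C * θ ^ n < a n := by
    intro θ C hθ0 hθ1 hC0
    by_contra hc
    push_neg at hc
    have h1 : θ * ρ ∈ U := by
      refine ⟨mul_pos hθ0 hρ0, C, hC0, fun n => ?_⟩
      have := hc n
      rw [ha, div_le_iff₀ (pow_pos hρ0 n)] at this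
      calc P n ≤ C * θ ^ n * ρ ^ n := this
      _ = C * (θ * ρ) ^ n := by rw [mul_pow]; ring
    have h2 : ρ ≤ θ * ρ := csInf_le hUbdd h1
    nlinarith
  have harec : ∀ k, a k * b k = ρ * a (k + 1) := by
    intro k
    rw [ha]
    show P k / ρ ^ k * b k = ρ * (P (k+1) / ρ ^ (k+1))
    rw [hPsucc k, pow_succ]
    field_simp
  -- norm lower bound for convex combinations of the u (m+k+1)
  have hnormlb : ∀ (m l : ℕ) (c : ℕ → ℝ), (∀ k, 0 ≤ c k) →
      δ / M * ∑ k ∈ range l, c k ≤ ‖∑ k ∈ range l, c k • u (m + k + 1)‖ := by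
    intro m l c hc
    have hsum0 : 0 ≤ ∑ k ∈ range l, c k := Finset.sum_nonneg (fun k _ => hc k)
    rcases hsum0.eq_or_lt with heq | hpos'
    · rw [← heq, mul_zero]; exact norm_nonneg _
    set w : ℕ → ℝ := fun k => c k * (b (m + k))⁻¹ with hw
    have hw0 : ∀ k, 0 ≤ w k := fun k =>
      mul_nonneg (hc k) (inv_nonneg.mpr (hb0 (m + k)).le)
    set s : ℝ := ∑ k ∈ range l, w k with hs
    have hslb : (∑ k ∈ range l, c k) / M ≤ s := by
      rw [div_eq_mul_inv, Finset.sum_mul]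
      apply Finset.sum_le_sum
      intro k _
      apply mul_le_mul_of_nonneg_left _ (hc k)
      exact inv_anti₀ (hb0 (m + k)) (hbM (m + k))
    have hs0 : 0 < s := lt_of_lt_of_le (div_pos hpos' hM0) hslb
    set v : X := Finset.centerMass (range l) w (fun k => u (m + k)) with hv
    have hvCH : v ∈ CH := Finset.centerMass_mem_convexHull _
      (fun k _ => hw0 k) hs0 (fun k _ => huCs (m + k))
    have hvsum : s • v = ∑ k ∈ range l, w k • u (m + k) := by
      rw [hv, Finset.centerMass, ← hs, smul_inv_smul₀ hs0.ne']
    have key : ∑ k ∈ range l, c k • u (m + k + 1) = s • L v := by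
      calc ∑ k ∈ range l, c k • u (m + k + 1)
          = ∑ k ∈ range l, w k • L (u (m + k)) := by
            apply Finset.sum_congr rfl
            intro k _
            rw [husucc (m + k), smul_smul]
      _ = ∑ k ∈ range l, L (w k • u (m + k)) := by
            apply Finset.sum_congr rfl
            intro k _
            rw [map_smul]
      _ = L (∑ k ∈ range l, w k • u (m + k)) := (map_sum L _ _).symm
      _ = L (s • v) := by rw [hvsum]
      _ = s • L v := by rw [map_smul]
    rw [key, norm_smul, Real.norm_of_nonneg hs0.le]
    calc δ / M * ∑ k ∈ range l, c k = (∑ k ∈ range l, c k) / M * δ := by ring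
    _ ≤ s * δ := mul_le_mul_of_nonneg_right hslb hδ0.le
    _ ≤ s * ‖L v‖ := mul_le_mul_of_nonneg_left (hδle v hvCH) hs0.le
  -- approximate eigenvectors
  have approx : ∀ i : ℕ, ∃ w : X, w ∈ Metric.sphere (0 : X) 1 ∩ K ∧
      ‖L w - ρ • w‖ ≤ ρ * M / δ * (1 / (i + 2)) := by
    intro i
    set ε : ℝ := 1 / (i + 2) with hε
    have hε0 : 0 < ε := by positivity
    have hε1 : ε < 1 := by
      rw [hε, div_lt_one (by positivity)]
      have : (0:ℝ) ≤ (i : ℝ) := Nat.cast_nonneg i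
      linarith
    obtain ⟨m, l, hl, hml⟩ := core_lemma a hapos hA hB ε hε0 hε1
    set Sz : ℝ := ∑ k ∈ range l, a (m + k + 1) with hSz
    have hSz0 : 0 < Sz :=
      Finset.sum_pos (fun k _ => hapos _) (by simpa using hl.ne')
    set z : X := ∑ k ∈ range l, a (m + k + 1) • u (m + k + 1) with hz
    have hz1 : δ / M * Sz ≤ ‖z‖ :=
      hnormlb m l (fun k => a (m + k + 1)) (fun k => (hapos _).le)
    have hz0 : 0 < ‖z‖ := lt_of_lt_of_le (by positivity) hz1
    have hLz : L z - ρ • z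
        = ρ • (a (m + l + 1) • u (m + l + 1) - a (m + 0 + 1) • u (m + 0 + 1)) := by
      have h1 : L z = ∑ k ∈ range l, ρ • (a (m + (k+1) + 1) • u (m + (k+1) + 1)) := by
        rw [hz, map_sum]
        apply Finset.sum_congr rfl
        intro k _
        rw [map_smul, hLu (m + k + 1), smul_smul, harec (m + k + 1), ← smul_smul]
        have he : m + k + 1 + 1 = m + (k + 1) + 1 := by omega
        rw [he]
      have h2 : ρ • z = ∑ k ∈ range l, ρ • (a (m + k + 1) • u (m + k + 1)) := by
        rw [hz, Finset.smul_sum]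
      rw [h1, h2, ← Finset.sum_sub_distrib]
      have h3 : ∀ k ∈ range l,
          ρ • a (m + (k + 1) + 1) • u (m + (k + 1) + 1) - ρ • a (m + k + 1) • u (m + k + 1)
          = ρ • (a (m + (k + 1) + 1) • u (m + (k + 1) + 1) - a (m + k + 1) • u (m + k + 1)) :=
        fun k _ => (smul_sub ρ _ _).symm
      rw [Finset.sum_congr rfl h3, ← Finset.smul_sum]
      congr 1
      exact Finset.sum_range_sub (fun k => a (m + k + 1) • u (m + k + 1)) l
    have hLzn : ‖L z - ρ • z‖ ≤ ρ * (ε * Sz) := by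
      rw [hLz, norm_smul, Real.norm_of_nonneg hρ0.le]
      apply mul_le_mul_of_nonneg_left _ hρ0.le
      calc ‖a (m + l + 1) • u (m + l + 1) - a (m + 0 + 1) • u (m + 0 + 1)‖
          ≤ ‖a (m + l + 1) • u (m + l + 1)‖ + ‖a (m + 0 + 1) • u (m + 0 + 1)‖ :=
            norm_sub_le _ _
      _ = a (m + l + 1) + a (m + 1) := by
            rw [norm_smul, norm_smul, Real.norm_of_nonneg (hapos _).le,
              Real.norm_of_nonneg (hapos _).le, (huKS _).2, (huKS _).2,
              mul_one, mul_one]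
      _ ≤ ε * Sz := by linarith [hml]
    have hzK : z ∈ K := by
      rw [hz]
      exact cone_sum K h0K hKadd (range l) (fun k => a (m + k + 1))
        (fun k => u (m + k + 1)) (fun k _ => (hapos _).le)
        (fun k _ => (huKS (m + k + 1)).1)
    refine ⟨‖z‖⁻¹ • z, ⟨?_, ?_⟩, ?_⟩
    · rw [mem_sphere_iff_norm, sub_zero, norm_smul, norm_inv, norm_norm,
        inv_mul_cancel₀ hz0.ne']
    · exact cone_smul K hKadd hzK (inv_nonneg.mpr hz0.le)
    · have hrw : L (‖z‖⁻¹ • z) - ρ • (‖z‖⁻¹ • z) = ‖z‖⁻¹ • (L z - ρ • z) := by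
        rw [map_smul, smul_sub, smul_comm ρ]
      rw [hrw, norm_smul, norm_inv, norm_norm]
      have h4 : ‖z‖⁻¹ ≤ (δ / M * Sz)⁻¹ := inv_anti₀ (by positivity) hz1
      calc ‖z‖⁻¹ * ‖L z - ρ • z‖ ≤ (δ / M * Sz)⁻¹ * (ρ * (ε * Sz)) :=
            mul_le_mul h4 hLzn (norm_nonneg _) (by positivity)
      _ = ρ * M / δ * ε := by field_simp
  -- pass to the limit
  choose w hwS hwa using approx
  have hwK : ∀ i, w i ∈ K := fun i => (hwS i).2
  have hwn : ∀ i, ‖w i‖ = 1 := fun i => by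
    have := (hwS i).1; simpa using this
  have hwCH : ∀ i, w i ∈ CH := fun i => hCsCH (hwS i)
  have hyD : ∀ i, L (w i) ∈ D := fun i => subset_closure ⟨w i, hwCH i, rfl⟩
  obtain ⟨y, hyD', φ, hφ, hconv⟩ := hcomp.tendsto_subseq hyD
  have htend : Filter.Tendsto (fun i : ℕ => ρ * M / δ * (1 / (i + 2)))
      Filter.atTop (nhds 0) := by
    have h1 : Filter.Tendsto (fun i : ℕ => ((i : ℝ) + 2)) Filter.atTop Filter.atTop :=
      Filter.tendsto_atTop_add_const_right _ 2 tendsto_natCast_atTop_atTop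
    have h2 : Filter.Tendsto (fun i : ℕ => ((i : ℝ) + 2)⁻¹) Filter.atTop (nhds 0) :=
      h1.inv_tendsto_atTop
    have h3 := h2.const_mul (ρ * M / δ)
    rw [mul_zero] at h3
    simpa [one_div] using h3
  have hdiff : Filter.Tendsto (fun i => L (w i) - ρ • w i) Filter.atTop (nhds 0) :=
    squeeze_zero_norm hwa htend
  have hdiffφ := hdiff.comp hφ.tendsto_atTop
  have hρw : Filter.Tendsto (fun i => ρ • w (φ i)) Filter.atTop (nhds y) := by
    have heq : (fun i => ρ • w (φ i))
        = fun i => L (w (φ i)) - (L (w (φ i)) - ρ • w (φ i)) := by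
      funext i; abel
    rw [heq]
    have := hconv.sub hdiffφ
    simpa using this
  set x : X := ρ⁻¹ • y with hx
  have hwφ : Filter.Tendsto (fun i => w (φ i)) Filter.atTop (nhds x) := by
    have h := hρw.const_smul ρ⁻¹
    simp only [inv_smul_smul₀ hρ0.ne'] at h
    exact h
  have hxK : x ∈ K :=
    hKclosed.mem_of_tendsto hwφ (Filter.Eventually.of_forall (fun i => hwK _))
  have hxn : ‖x‖ = 1 := by
    have h1 : Filter.Tendsto (fun i => ‖w (φ i)‖) Filter.atTop (nhds ‖x‖) :=
      (continuous_norm.tendsto x).comp hwφ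
    have h2 : (fun i => ‖w (φ i)‖) = fun _ => (1 : ℝ) := funext fun i => hwn _
    rw [h2] at h1
    exact tendsto_nhds_unique h1 tendsto_const_nhds
  have hLx : L x = ρ • x := by
    have h1 : Filter.Tendsto (fun i => L (w (φ i))) Filter.atTop (nhds (L x)) :=
      (L.continuous.tendsto x).comp hwφ
    have h2 : L x = y := tendsto_nhds_unique h1 hconv
    rw [h2, hx, smul_inv_smul₀ hρ0.ne']
  have hnLx : ‖L x‖ = ρ := by
    rw [hLx, norm_smul, Real.norm_of_nonneg hρ0.le, hxn, mul_one]
  exact ⟨x, hxK, hxn, by rw [hnLx]; exact hρ0, by rw [hnLx, hLx]⟩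
end
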